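/- arXiv:1908.00179 — 8 statements merged into one kernel-verified Lean document; each statement's English description precedes it below -/
import Mathlib

section
/- Let A ⊆ (ℝ≥0)^n be downward closed and contain an open neighborhood of 0, and f : A → ℝ≥0 non-decreasing with f(0) = 0 and continuous at 0. Then g(x) = inf { Σᵢ f(xᵢ) : each xᵢ ∈ A ∩ (ℚ≥0)^n and x ≤ Σᵢ xᵢ } is continuous on (ℝ≥0)^n. -/
noncomputable def gApprox {n : ℕ} (A : Set (Fin n → ℝ)) (f : (Fin n → ℝ) → ℝ)
    (x : Fin n → ℝ) : ℝ :=
  sInf {s : ℝ | ∃ (k : ℕ) (w : Fin k → (Fin n → ℝ)),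
    (∀ i, w i ∈ A ∧ ∀ j, ∃ q : ℚ, w i j = (q : ℝ)) ∧
    (∀ j, x j ≤ ∑ i, w i j) ∧ s = ∑ i, f (w i)}

namespace GApproxAux

variable {n : ℕ} (A : Set (Fin n → ℝ)) (f : (Fin n → ℝ) → ℝ)

def gSet (x : Fin n → ℝ) : Set ℝ :=
  {s : ℝ | ∃ (k : ℕ) (w : Fin k → (Fin n → ℝ)),
    (∀ i, w i ∈ A ∧ ∀ j, ∃ q : ℚ, w i j = (q : ℝ)) ∧
    (∀ j, x j ≤ ∑ i, w i j) ∧ s = ∑ i, f (w i)}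

lemma gApprox_eq (x : Fin n → ℝ) : gApprox A f x = sInf (gSet A f x) := rfl

variable {A f}

lemma gSet_lb (hfnn : ∀ x ∈ A, 0 ≤ f x) (x : Fin n → ℝ) :
    ∀ s ∈ gSet A f x, (0:ℝ) ≤ s := by
  rintro s ⟨k, w, hw, -, rfl⟩
  exact Finset.sum_nonneg fun i _ => hfnn _ (hw i).1

lemma gSet_bdd (hfnn : ∀ x ∈ A, 0 ≤ f x) (x : Fin n → ℝ) :
    BddBelow (gSet A f x) := ⟨0, gSet_lb hfnn x⟩

lemma gSet_nonempty
    (hAnbhd : ∃ ε > (0 : ℝ), ∀ x : Fin n → ℝ, (∀ i, 0 ≤ x i) → (∀ i, x i < ε) → x ∈ A)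
    {x : Fin n → ℝ} (hx : ∀ i, 0 ≤ x i) : (gSet A f x).Nonempty := by
  obtain ⟨ε, hε, hA⟩ := hAnbhd
  obtain ⟨q, hq0, hqε⟩ := exists_rat_btwn hε
  have hq0' : (0:ℝ) < (q:ℝ) := hq0
  set k : ℕ := ⌈(∑ j, x j) / (q:ℝ)⌉₊ with hk
  refine ⟨∑ i : Fin k, f (fun _ => (q:ℝ)), k, fun _ _ => (q:ℝ), ?_, ?_, rfl⟩
  · intro i
    exact ⟨hA _ (fun _ => le_of_lt hq0') (fun _ => hqε), fun j => ⟨q, rfl⟩⟩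
  · intro j
    have h1 : x j ≤ ∑ j, x j :=
      Finset.single_le_sum (fun i _ => hx i) (Finset.mem_univ j)
    have h2 : (∑ j, x j) ≤ (k:ℝ) * (q:ℝ) := by
      rw [hk]
      have := Nat.le_ceil ((∑ j, x j) / (q:ℝ))
      calc (∑ j, x j) = (∑ j, x j) / (q:ℝ) * (q:ℝ) := by field_simp
        _ ≤ (⌈(∑ j, x j) / (q:ℝ)⌉₊ : ℝ) * (q:ℝ) := by
            exact mul_le_mul_of_nonneg_right this (le_of_lt hq0')
    simpa [Finset.sum_const, Finset.card_univ, mul_comm] using h1.trans h2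

lemma gSet_combine {x d z : Fin n → ℝ} (hle : ∀ j, z j ≤ x j + d j) :
    ∀ s ∈ gSet A f x, ∀ t ∈ gSet A f d, s + t ∈ gSet A f z := by
  rintro s ⟨k, w, hw, hcov, rfl⟩ t ⟨m, v, hv, hcov', rfl⟩
  refine ⟨k + m, Fin.append w v, ?_, ?_, ?_⟩
  · intro i
    refine Fin.addCases (fun i => ?_) (fun i => ?_) i
    · simpa [Fin.append_left] using hw i
    · simpa [Fin.append_right] using hv i
  · intro j
    have := hcov j
    have := hcov' j
    rw [Fin.sum_univ_add]
    simp only [Fin.append_left, Fin.append_right]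
    have := hle j
    linarith
  · rw [Fin.sum_univ_add]
    simp [Fin.append_left, Fin.append_right]

/-- Key inequality: `g z ≤ g x + g d` whenever `z ≤ x + d` coordinatewise. -/
lemma g_le_add
    (hAnbhd : ∃ ε > (0 : ℝ), ∀ x : Fin n → ℝ, (∀ i, 0 ≤ x i) → (∀ i, x i < ε) → x ∈ A)
    (hfnn : ∀ x ∈ A, 0 ≤ f x)
    {x d z : Fin n → ℝ} (hx : ∀ i, 0 ≤ x i) (hd : ∀ i, 0 ≤ d i)
    (hle : ∀ j, z j ≤ x j + d j) :
    gApprox A f z ≤ gApprox A f x + gApprox A f d := by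
  have hbz := gSet_bdd (A := A) (f := f) hfnn z
  have ex : gApprox A f x = sInf (gSet A f x) := rfl
  have ed : gApprox A f d = sInf (gSet A f d) := rfl
  have ez : gApprox A f z = sInf (gSet A f z) := rfl
  have h1 : ∀ t ∈ gSet A f d, gApprox A f z ≤ gApprox A f x + t := by
    intro t ht
    have h2 : ∀ s ∈ gSet A f x, gApprox A f z - t ≤ s := by
      intro s hs
      have := csInf_le hbz (gSet_combine hle s hs t ht)
      linarith [this]
    have := le_csInf (gSet_nonempty (A := A) (f := f) hAnbhd hx) h2
    linarith [this]
  have h3 : ∀ t ∈ gSet A f d, gApprox A f z - gApprox A f x ≤ t := by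
    intro t ht; linarith [h1 t ht]
  have := le_csInf (gSet_nonempty (A := A) (f := f) hAnbhd hd) h3
  linarith [this]

lemma g_small
    (hAnbhd : ∃ ε > (0 : ℝ), ∀ x : Fin n → ℝ, (∀ i, 0 ≤ x i) → (∀ i, x i < ε) → x ∈ A)
    (hfnn : ∀ x ∈ A, 0 ≤ f x) (hf0 : f 0 = 0)
    (hfcont : ContinuousWithinAt f A 0)
    {ε : ℝ} (hε : 0 < ε) :
    ∃ δ > 0, ∀ x : Fin n → ℝ, (∀ i, 0 ≤ x i) → (∀ i, x i < δ) →
      gApprox A f x < ε := by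
  obtain ⟨ε₀, hε₀, hA⟩ := hAnbhd
  rw [Metric.continuousWithinAt_iff] at hfcont
  obtain ⟨δ', hδ', hf⟩ := hfcont ε hε
  obtain ⟨q, hq0, hqlt⟩ := exists_rat_btwn (show (0:ℝ) < min ε₀ δ' from lt_min hε₀ hδ')
  have hq0' : (0:ℝ) < (q:ℝ) := hq0
  refine ⟨(q:ℝ), hq0', fun x hx hxq => ?_⟩
  have hqmem : (fun _ => (q:ℝ) : Fin n → ℝ) ∈ A :=
    hA _ (fun _ => le_of_lt hq0') (fun _ => hqlt.trans_le (min_le_left _ _))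
  have hdistq : dist (fun _ => (q:ℝ) : Fin n → ℝ) 0 < δ' := by
    rcases Nat.eq_zero_or_pos n with hn | hn
    · have : dist (fun _ => (q:ℝ) : Fin n → ℝ) 0 = 0 := by
        apply dist_eq_zero.mpr
        funext i; exact absurd i.2 (by omega)
      simpa [this] using hδ'
    · rw [dist_pi_lt_iff hδ']
      intro i
      simp only [Pi.zero_apply, Real.dist_eq, sub_zero]
      rw [abs_of_nonneg (le_of_lt hq0')]
      exact hqlt.trans_le (min_le_right _ _)
  have hfq : f (fun _ => (q:ℝ)) < ε := by
    have := hf hqmem hdistq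
    rw [hf0, Real.dist_eq, sub_zero] at this
    calc f (fun _ => (q:ℝ)) ≤ |f (fun _ => (q:ℝ))| := le_abs_self _
      _ < ε := this
  have hmem : f (fun _ => (q:ℝ)) ∈ gSet A f x := by
    refine ⟨1, fun _ _ => (q:ℝ), fun i => ⟨hqmem, fun j => ⟨q, rfl⟩⟩, ?_, by simp⟩
    intro j
    simpa using le_of_lt (hxq j)
  exact lt_of_le_of_lt (csInf_le (gSet_bdd hfnn x) hmem) hfq

end GApproxAux

theorem stmt_3 {n : ℕ} (A : Set (Fin n → ℝ)) (f : (Fin n → ℝ) → ℝ)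
    (hApos : A ⊆ {x | ∀ i, 0 ≤ x i})
    (hAdc : ∀ x ∈ A, ∀ y : Fin n → ℝ, (∀ i, 0 ≤ y i) → (∀ i, y i ≤ x i) → y ∈ A)
    (hAnbhd : ∃ ε > (0 : ℝ), ∀ x : Fin n → ℝ, (∀ i, 0 ≤ x i) → (∀ i, x i < ε) → x ∈ A)
    (hfnn : ∀ x ∈ A, 0 ≤ f x)
    (hfmono : ∀ x ∈ A, ∀ y ∈ A, (∀ i, x i ≤ y i) → f x ≤ f y)
    (hf0 : f 0 = 0)
    (hfcont : ContinuousWithinAt f A 0) :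
    ContinuousOn (gApprox A f) {x | ∀ i, 0 ≤ x i} := by
  intro x hx
  rw [Metric.continuousWithinAt_iff]
  intro ε hε
  obtain ⟨δ, hδ, hsmall⟩ := GApproxAux.g_small hAnbhd hfnn hf0 hfcont hε
  refine ⟨δ, hδ, fun y hy hyx => ?_⟩
  set d : Fin n → ℝ := fun i => max (y i - x i) 0 with hdd
  set d' : Fin n → ℝ := fun i => max (x i - y i) 0 with hdd'
  have hd0 : ∀ i, 0 ≤ d i := fun i => le_max_right _ _
  have hd0' : ∀ i, 0 ≤ d' i := fun i => le_max_right _ _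
  have hdlt : ∀ i, d i < δ := by
    intro i
    have h1 : d i ≤ |y i - x i| := max_le (le_abs_self _) (abs_nonneg _)
    have h2 : |y i - x i| = dist (y i) (x i) := (Real.dist_eq _ _).symm
    have h3 := dist_le_pi_dist y x i
    calc d i ≤ dist (y i) (x i) := h2 ▸ h1
      _ ≤ dist y x := h3
      _ < δ := hyx
  have hdlt' : ∀ i, d' i < δ := by
    intro i
    have h1 : d' i ≤ |x i - y i| := max_le (le_abs_self _) (abs_nonneg _)
    have h2 : |x i - y i| = dist (y i) (x i) := by
      rw [Real.dist_eq, abs_sub_comm]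
    have h3 := dist_le_pi_dist y x i
    calc d' i ≤ dist (y i) (x i) := h2 ▸ h1
      _ ≤ dist y x := h3
      _ < δ := hyx
  have hgd : gApprox A f d < ε := hsmall d hd0 hdlt
  have hgd' : gApprox A f d' < ε := hsmall d' hd0' hdlt'
  have hle1 : ∀ j, y j ≤ x j + d j := by
    intro j; simp only [hdd]; rcases le_total (y j) (x j) with h | h <;> simp [max_def] <;> split <;> linarith
  have hle2 : ∀ j, x j ≤ y j + d' j := by
    intro j; simp only [hdd']; rcases le_total (x j) (y j) with h | h <;> simp [max_def] <;> split <;> linarith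
  have h1 := GApproxAux.g_le_add hAnbhd hfnn hx hd0 hle1
  have h2 := GApproxAux.g_le_add hAnbhd hfnn hy hd0' hle2
  rw [Real.dist_eq, abs_sub_lt_iff]
  constructor <;> linarith
end

section
/- Let A ⊆ (ℝ≥0)^n be downward closed and contain an open neighborhood of 0, and f : A → ℝ≥0 non-decreasing with f(0) = 0 and continuous at 0. Let g(x) = inf { Σᵢ f(xᵢ) : each xᵢ ∈ A ∩ (ℚ≥0)^n and x ≤ Σᵢ xᵢ }. Then g(x) ≤ f(x) for all x ∈ A (not merely for rational x). -/
theorem stmt_4 {n : ℕ} (A : Set (Fin n → ℝ)) (f : (Fin n → ℝ) → ℝ)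
    (hApos : A ⊆ {x | ∀ i, 0 ≤ x i})
    (hAdc : ∀ x ∈ A, ∀ y : Fin n → ℝ, (∀ i, 0 ≤ y i) → (∀ i, y i ≤ x i) → y ∈ A)
    (hAnbhd : ∃ ε > (0 : ℝ), ∀ x : Fin n → ℝ, (∀ i, 0 ≤ x i) → (∀ i, x i < ε) → x ∈ A)
    (hfnn : ∀ x ∈ A, 0 ≤ f x)
    (hfmono : ∀ x ∈ A, ∀ y ∈ A, (∀ i, x i ≤ y i) → f x ≤ f y)
    (hf0 : f 0 = 0)
    (hfcont : ContinuousWithinAt f A 0) :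
    ∀ x ∈ A, gApprox A f x ≤ f x := by
  intro x hx
  have hxnn : ∀ i, 0 ≤ x i := hApos hx
  have hbdd : BddBelow {s : ℝ | ∃ (k : ℕ) (w : Fin k → (Fin n → ℝ)),
      (∀ i, w i ∈ A ∧ ∀ j, ∃ q : ℚ, w i j = (q : ℝ)) ∧
      (∀ j, x j ≤ ∑ i, w i j) ∧ s = ∑ i, f (w i)} := by
    refine ⟨0, ?_⟩
    rintro s ⟨k, w, hw, _, rfl⟩
    exact Finset.sum_nonneg fun i _ => hfnn _ (hw i).1
  have key : ∀ δ > (0 : ℝ), gApprox A f x ≤ f x + δ := by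
    intro δ hδ
    obtain ⟨ε, hε, hεA⟩ := hAnbhd
    have hcont := hfcont
    rw [ContinuousWithinAt, hf0] at hcont
    obtain ⟨η, hη, hηf⟩ := Metric.tendsto_nhdsWithin_nhds.mp hcont δ hδ
    set t := min η ε with ht
    have ht0 : 0 < t := lt_min hη hε
    choose q hq1 hq2 using fun j => exists_rat_btwn (show x j - t < x j by linarith [ht0])
    set q' : Fin n → ℝ := fun j => ((max (q j) 0 : ℚ) : ℝ) with hq'
    have hq'0 : ∀ j, 0 ≤ q' j := fun j => by
      simp [hq', Rat.cast_max]
    have hq'le : ∀ j, q' j ≤ x j := fun j => by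
      simp only [hq', Rat.cast_max]
      exact max_le (le_of_lt (hq2 j)) (by exact_mod_cast hxnn j)
    have hgap : ∀ j, x j - q' j < t := fun j => by
      have : (q j : ℝ) ≤ q' j := by simp [hq', Rat.cast_max]
      have := hq1 j
      linarith
    choose r hr1 hr2 using fun j => exists_rat_btwn (hgap j)
    set r' : Fin n → ℝ := fun j => ((r j : ℚ) : ℝ) with hr'
    have hr'0 : ∀ j, 0 ≤ r' j := fun j =>
      le_of_lt (lt_of_le_of_lt (by linarith [hq'le j]) (hr1 j))
    have hr'lt : ∀ j, r' j < t := fun j => hr2 j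
    have hq'A : q' ∈ A := hAdc x hx q' hq'0 hq'le
    have hr'A : A.Mem r' := hεA r' hr'0 fun j => lt_of_lt_of_le (hr'lt j) (min_le_right _ _)
    have hfr : f r' < δ := by
      have hd : dist r' 0 < η := by
        rcases Nat.eq_zero_or_pos n with h | h
        · subst h
          simpa [dist_pi_def] using hη
        · rw [dist_pi_lt_iff hη]
          intro j
          rw [Real.dist_eq, Pi.zero_apply, sub_zero, abs_of_nonneg (hr'0 j)]
          exact lt_of_lt_of_le (hr'lt j) (min_le_left _ _)
      have := hηf hr'A hd
      rw [Real.dist_eq, sub_zero] at this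
      exact lt_of_le_of_lt (le_abs_self _) this
    have hmem : (f q' + f r') ∈ {s : ℝ | ∃ (k : ℕ) (w : Fin k → (Fin n → ℝ)),
        (∀ i, w i ∈ A ∧ ∀ j, ∃ qq : ℚ, w i j = (qq : ℝ)) ∧
        (∀ j, x j ≤ ∑ i, w i j) ∧ s = ∑ i, f (w i)} := by
      refine ⟨2, ![q', r'], ?_, ?_, ?_⟩
      · intro i
        fin_cases i
        · exact ⟨hq'A, fun j => ⟨max (q j) 0, rfl⟩⟩
        · exact ⟨hr'A, fun j => ⟨r j, rfl⟩⟩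
      · intro j
        rw [Fin.sum_univ_two]
        simp only [Matrix.cons_val_zero, Matrix.cons_val_one, Matrix.head_cons]
        linarith [hr1 j]
      · rw [Fin.sum_univ_two]
        simp
    calc gApprox A f x ≤ f q' + f r' := csInf_le hbdd hmem
      _ ≤ f x + δ := add_le_add (hfmono q' hq'A x hx hq'le) (le_of_lt hfr)
  exact le_of_forall_pos_le_add key
end

section
/- Let A ⊆ (ℝ≥0)^n be downward closed and contain an open neighborhood of 0, and f : A → ℝ≥0 non-decreasing with f(0) = 0 and continuous at 0. Let g(x) = inf { Σᵢ f(xᵢ) : each xᵢ ∈ A ∩ (ℚ≥0)^n and x ≤ Σᵢ xᵢ }. If h : (ℝ≥0)^n → ℝ≥0 is a modulus (continuous, non-decreasing, subadditive, h(0)=0) with h(x) ≤ f(x) for all x ∈ A, then h(x) ≤ g(x) for all x ∈ (ℝ≥0)^n. That is, g is the largest modulus below f on A. -/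
theorem stmt_5 {n : ℕ} (A : Set (Fin n → ℝ)) (f h : (Fin n → ℝ) → ℝ)
    (hApos : A ⊆ {x | ∀ i, 0 ≤ x i})
    (hAdc : ∀ x ∈ A, ∀ y : Fin n → ℝ, (∀ i, 0 ≤ y i) → (∀ i, y i ≤ x i) → y ∈ A)
    (hAnbhd : ∃ ε > (0 : ℝ), ∀ x : Fin n → ℝ, (∀ i, 0 ≤ x i) → (∀ i, x i < ε) → x ∈ A)
    (hfnn : ∀ x ∈ A, 0 ≤ f x)
    (hfmono : ∀ x ∈ A, ∀ y ∈ A, (∀ i, x i ≤ y i) → f x ≤ f y)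
    (hf0 : f 0 = 0)
    (hfcont : ContinuousWithinAt f A 0)
    (hhcont : ContinuousOn h {x | ∀ i, 0 ≤ x i})
    (hhnn : ∀ x : Fin n → ℝ, (∀ i, 0 ≤ x i) → 0 ≤ h x)
    (hhmono : ∀ x y : Fin n → ℝ, (∀ i, 0 ≤ x i) → (∀ i, x i ≤ y i) → h x ≤ h y)
    (hhsub : ∀ x y : Fin n → ℝ, (∀ i, 0 ≤ x i) → (∀ i, 0 ≤ y i) → h (x + y) ≤ h x + h y)
    (hh0 : h 0 = 0)
    (hhf : ∀ x ∈ A, h x ≤ f x) :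
    ∀ x : Fin n → ℝ, (∀ i, 0 ≤ x i) → h x ≤ gApprox A f x := by
  -- general subadditivity lemma over finite sums
  have hsum : ∀ (k : ℕ) (w : Fin k → (Fin n → ℝ)), (∀ i j, 0 ≤ w i j) →
      h (∑ i, w i) ≤ ∑ i, h (w i) := by
    intro k
    induction k with
    | zero => intro w _; simp [hh0]
    | succ m ih =>
      intro w hw
      rw [Fin.sum_univ_succ, Fin.sum_univ_succ]
      have hsnn : ∀ j, 0 ≤ (∑ i : Fin m, w i.succ) j := by
        intro j
        have : (∑ i : Fin m, w i.succ) j = ∑ i : Fin m, w i.succ j := by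
          simp [Finset.sum_apply]
        rw [this]
        exact Finset.sum_nonneg fun i _ => hw _ j
      calc h (w 0 + ∑ i : Fin m, w i.succ)
          ≤ h (w 0) + h (∑ i : Fin m, w i.succ) :=
            hhsub _ _ (hw 0) hsnn
        _ ≤ h (w 0) + ∑ i : Fin m, h (w i.succ) := by
            gcongr; exact ih _ (fun i j => hw _ j)
  intro x hx
  apply le_csInf
  · -- nonemptiness
    obtain ⟨ε, hε, hball⟩ := hAnbhd
    obtain ⟨q, hq0, hqε⟩ := exists_rat_btwn hε
    have hq0' : (0:ℝ) < (q:ℝ) := hq0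
    set v : Fin n → ℝ := fun _ => (q : ℝ) with hv
    have hvA : v ∈ A := hball v (fun _ => le_of_lt hq0') (fun _ => hqε)
    set B : ℝ := ∑ j, x j with hB
    have hxB : ∀ j, x j ≤ B := fun j =>
      Finset.single_le_sum (fun i _ => hx i) (Finset.mem_univ j)
    obtain ⟨k, hk⟩ := exists_nat_ge (B / (q:ℝ))
    refine ⟨∑ i : Fin k, f v, k, fun _ => v, fun i => ⟨hvA, fun j => ⟨q, rfl⟩⟩, ?_, rfl⟩
    intro j
    have : (∑ _i : Fin k, (q:ℝ)) = (k:ℝ) * q := by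
      simp [mul_comm]
    calc x j ≤ B := hxB j
      _ ≤ (k:ℝ) * q := by
          rw [← div_le_iff₀ hq0'] at *
          exact le_trans hk (le_refl _)
      _ = ∑ i : Fin k, v j := by simp [hv, mul_comm]
  · rintro s ⟨k, w, hwA, hwge, rfl⟩
    have hwnn : ∀ i j, 0 ≤ w i j := fun i j => hApos (hwA i).1 j
    have h1 : h x ≤ h (∑ i, w i) := by
      apply hhmono x _ hx
      intro j
      have : (∑ i, w i) j = ∑ i, w i j := by simp [Finset.sum_apply]
      rw [this]; exact hwge j
    have h2 : h (∑ i, w i) ≤ ∑ i, h (w i) := hsum k w hwnn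
    have h3 : ∑ i, h (w i) ≤ ∑ i, f (w i) :=
      Finset.sum_le_sum fun i _ => hhf _ (hwA i).1
    linarith
end

section
/- Let Δ be a modulus of arity k with Δ mapping [0,1]^k into [0,1]. Let x̄, ȳ ∈ [0,1]^k with Δ(π(ȳ − x̄)) > 0 and a, b ∈ [0,1] with a ≤ b < a + Δ(π(ȳ − x̄)). Define u(z̄) = min{1, a + ((b−a)/Δ(π(ȳ − x̄))) · Δ(π(z̄ − x̄))}. Then u : [0,1]^k → [0,1] satisfies u(x̄) = a, u(ȳ) = b, and u respects Δ, i.e., |u(z̄) − u(w̄)| ≤ Δ(π(z̄ − w̄)) for all z̄, w̄ ∈ [0,1]^k. -/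
/-! The map z̄ ↦ Δ(π(z̄ − x̄)) respects Δ: this is the triangle inequality for Δ, which follows
from monotonicity and subadditivity since π(z̄ − x̄) ≤ π(w̄ − x̄) + π(z̄ − w̄) coordinatewise.
Multiplying by the slope (b − a)/Δ(π(ȳ − x̄)) ∈ [0, 1), adding a and truncating at 1 are all
1-Lipschitz operations, so u respects Δ as well; the slope is chosen so that u(ȳ) = b. -/

section Modulus

variable {ι : Type*} {Δ : (ι → ℝ) → ℝ}

theorem modulus_nonneg (hmono : ∀ x y : ι → ℝ, (∀ i, 0 ≤ x i) → (∀ i, x i ≤ y i) → Δ x ≤ Δ y)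
    (h0 : Δ 0 = 0) {x : ι → ℝ} (hx : ∀ i, 0 ≤ x i) : 0 ≤ Δ x :=
  h0 ▸ hmono 0 x (fun _ => le_rfl) hx

theorem modulus_abs_sub_le_add
    (hmono : ∀ x y : ι → ℝ, (∀ i, 0 ≤ x i) → (∀ i, x i ≤ y i) → Δ x ≤ Δ y)
    (hsub : ∀ x y : ι → ℝ, (∀ i, 0 ≤ x i) → (∀ i, 0 ≤ y i) → Δ (x + y) ≤ Δ x + Δ y)
    (x z w : ι → ℝ) :
    Δ (fun i => |z i - x i|) ≤ Δ (fun i => |w i - x i|) + Δ (fun i => |z i - w i|) :=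
  calc Δ (fun i => |z i - x i|)
      ≤ Δ ((fun i => |w i - x i|) + fun i => |z i - w i|) :=
        hmono _ _ (fun _ => abs_nonneg _) fun i =>
          (abs_sub_le (z i) (w i) (x i)).trans_eq (add_comm _ _)
    _ ≤ _ := hsub _ _ (fun _ => abs_nonneg _) fun _ => abs_nonneg _

theorem modulus_abs_sub_sub_le
    (hmono : ∀ x y : ι → ℝ, (∀ i, 0 ≤ x i) → (∀ i, x i ≤ y i) → Δ x ≤ Δ y)
    (hsub : ∀ x y : ι → ℝ, (∀ i, 0 ≤ x i) → (∀ i, 0 ≤ y i) → Δ (x + y) ≤ Δ x + Δ y)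
    (x z w : ι → ℝ) :
    |Δ (fun i => |z i - x i|) - Δ (fun i => |w i - x i|)| ≤ Δ (fun i => |z i - w i|) := by
  have hwz := modulus_abs_sub_le_add hmono hsub x w z
  simp only [abs_sub_comm (w _) (z _)] at hwz
  have hzw := modulus_abs_sub_le_add hmono hsub x z w
  rw [abs_sub_le_iff]
  constructor <;> linarith

end Modulus

theorem abs_min_affine_sub_min_affine_le {m a c : ℝ} (hc0 : 0 ≤ c) (hc1 : c ≤ 1) (s t : ℝ) :
    |min m (a + c * s) - min m (a + c * t)| ≤ |s - t| :=
  calc |min m (a + c * s) - min m (a + c * t)|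
      ≤ max |m - m| |a + c * s - (a + c * t)| := abs_min_sub_min_le_max _ _ _ _
    _ = c * |s - t| := by
        rw [sub_self, abs_zero, show a + c * s - (a + c * t) = c * (s - t) by ring, abs_mul,
          abs_of_nonneg hc0, max_eq_right (by positivity)]
    _ ≤ |s - t| := mul_le_of_le_one_left (abs_nonneg _) hc1

theorem stmt_9_general {k : ℕ} (Δ : (Fin k → ℝ) → ℝ)
    (hmono : ∀ x y : Fin k → ℝ, (∀ i, 0 ≤ x i) → (∀ i, x i ≤ y i) → Δ x ≤ Δ y)
    (hsub : ∀ x y : Fin k → ℝ, (∀ i, 0 ≤ x i) → (∀ i, 0 ≤ y i) → Δ (x + y) ≤ Δ x + Δ y)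
    (h0 : Δ 0 = 0)
    (x y : Fin k → ℝ)
    (a b : ℝ) (ha : a ∈ Set.Icc (0 : ℝ) 1) (hb : b ∈ Set.Icc (0 : ℝ) 1)
    (hD : 0 < Δ (fun i => |y i - x i|))
    (hab : a ≤ b) (hb' : b < a + Δ (fun i => |y i - x i|)) :
    (fun z : Fin k → ℝ =>
        min 1 (a + ((b - a) / Δ (fun i => |y i - x i|)) * Δ (fun i => |z i - x i|))) x = a ∧
    (fun z : Fin k → ℝ =>
        min 1 (a + ((b - a) / Δ (fun i => |y i - x i|)) * Δ (fun i => |z i - x i|))) y = b ∧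
    (∀ z : Fin k → ℝ, (∀ i, z i ∈ Set.Icc (0 : ℝ) 1) →
        min 1 (a + ((b - a) / Δ (fun i => |y i - x i|)) * Δ (fun i => |z i - x i|))
          ∈ Set.Icc (0 : ℝ) 1) ∧
    (∀ z w : Fin k → ℝ, (∀ i, z i ∈ Set.Icc (0 : ℝ) 1) → (∀ i, w i ∈ Set.Icc (0 : ℝ) 1) →
        |min 1 (a + ((b - a) / Δ (fun i => |y i - x i|)) * Δ (fun i => |z i - x i|)) -
          min 1 (a + ((b - a) / Δ (fun i => |y i - x i|)) * Δ (fun i => |w i - x i|))|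
          ≤ Δ (fun i => |z i - w i|)) := by
  set D := Δ (fun i => |y i - x i|)
  set c := (b - a) / D
  have hc0 : 0 ≤ c := div_nonneg (sub_nonneg.2 hab) hD.le
  have hc1 : c ≤ 1 := (div_le_one hD).2 (by linarith)
  refine ⟨?_, ?_, fun z _ => ⟨?_, min_le_left _ _⟩, fun z w _ _ => ?_⟩
  · show min 1 (a + c * Δ (fun i => |x i - x i|)) = a
    simp only [sub_self, abs_zero]
    rw [← Pi.zero_def, h0, mul_zero, add_zero, min_eq_right ha.2]
  · show min 1 (a + c * D) = b
    rw [div_mul_cancel₀ _ hD.ne', add_sub_cancel, min_eq_right hb.2]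
  · exact le_min zero_le_one <|
      add_nonneg ha.1 (mul_nonneg hc0 (modulus_nonneg hmono h0 fun _ => abs_nonneg _))
  · exact (abs_min_affine_sub_min_affine_le hc0 hc1 _ _).trans
      (modulus_abs_sub_sub_le hmono hsub x z w)

theorem stmt_9 {k : ℕ} (Δ : (Fin k → ℝ) → ℝ)
    (hcont : ContinuousOn Δ {x | ∀ i, 0 ≤ x i})
    (hnn : ∀ x : Fin k → ℝ, (∀ i, 0 ≤ x i) → 0 ≤ Δ x)
    (hmono : ∀ x y : Fin k → ℝ, (∀ i, 0 ≤ x i) → (∀ i, x i ≤ y i) → Δ x ≤ Δ y)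
    (hsub : ∀ x y : Fin k → ℝ, (∀ i, 0 ≤ x i) → (∀ i, 0 ≤ y i) → Δ (x + y) ≤ Δ x + Δ y)
    (h0 : Δ 0 = 0)
    (hΔ1 : ∀ x : Fin k → ℝ, (∀ i, x i ∈ Set.Icc (0 : ℝ) 1) → Δ x ≤ 1)
    (x y : Fin k → ℝ) (hx : ∀ i, x i ∈ Set.Icc (0 : ℝ) 1) (hy : ∀ i, y i ∈ Set.Icc (0 : ℝ) 1)
    (a b : ℝ) (ha : a ∈ Set.Icc (0 : ℝ) 1) (hb : b ∈ Set.Icc (0 : ℝ) 1)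
    (hD : 0 < Δ (fun i => |y i - x i|))
    (hab : a ≤ b) (hb' : b < a + Δ (fun i => |y i - x i|)) :
    (fun z : Fin k → ℝ =>
        min 1 (a + ((b - a) / Δ (fun i => |y i - x i|)) * Δ (fun i => |z i - x i|))) x = a ∧
    (fun z : Fin k → ℝ =>
        min 1 (a + ((b - a) / Δ (fun i => |y i - x i|)) * Δ (fun i => |z i - x i|))) y = b ∧
    (∀ z : Fin k → ℝ, (∀ i, z i ∈ Set.Icc (0 : ℝ) 1) →
        min 1 (a + ((b - a) / Δ (fun i => |y i - x i|)) * Δ (fun i => |z i - x i|))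
          ∈ Set.Icc (0 : ℝ) 1) ∧
    (∀ z w : Fin k → ℝ, (∀ i, z i ∈ Set.Icc (0 : ℝ) 1) → (∀ i, w i ∈ Set.Icc (0 : ℝ) 1) →
        |min 1 (a + ((b - a) / Δ (fun i => |y i - x i|)) * Δ (fun i => |z i - x i|)) -
          min 1 (a + ((b - a) / Δ (fun i => |y i - x i|)) * Δ (fun i => |w i - x i|))|
          ≤ Δ (fun i => |z i - w i|)) :=
  stmt_9_general Δ hmono hsub h0 x y a b ha hb hD hab hb'
end

section
/- Let Δ be a modulus of arity k bounded by M on [0,1]^k, and let (x̄, ȳ, a, b) and (x̄', ȳ', a', b') both satisfy the conditions of the construction (a ≤ b < a + Δ(π(ȳ−x̄)), with Δ(π(ȳ−x̄)) > 0, similarly primed). Then the uniform distance between u = min{1, a + ((b−a)/Δ(π(ȳ−x̄)))·Δ(π(·−x̄))} and u' = min{1, a' + ((b'−a')/Δ(π(ȳ'−x̄')))·Δ(π(·−x̄'))} on [0,1]^k is at most |a − a'| + ((b−a)/Δ(π(ȳ−x̄)))·Δ(π(x̄ − x̄')) + M·|(b−a)/Δ(π(ȳ−x̄)) − (b'−a')/Δ(π(ȳ'−x̄'))|.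 -/
lemma min_one_lip (p q : ℝ) : |min 1 p - min 1 q| ≤ |p - q| := by
  rcases abs_cases (p - q) with ⟨he, _⟩ | ⟨he, _⟩ <;>
  rcases le_total p 1 with h | h <;> rcases le_total q 1 with h' | h' <;>
    simp only [min_eq_left, min_eq_right, h, h', abs_sub_le_iff, sub_self, abs_zero] <;>
    (try constructor) <;> linarith [abs_nonneg (p-q)]

theorem stmt_10 {k : ℕ} (Δ : (Fin k → ℝ) → ℝ) (M : ℝ)
    (hcont : ContinuousOn Δ {x | ∀ i, 0 ≤ x i})
    (hnn : ∀ x : Fin k → ℝ, (∀ i, 0 ≤ x i) → 0 ≤ Δ x)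
    (hmono : ∀ x y : Fin k → ℝ, (∀ i, 0 ≤ x i) → (∀ i, x i ≤ y i) → Δ x ≤ Δ y)
    (hsub : ∀ x y : Fin k → ℝ, (∀ i, 0 ≤ x i) → (∀ i, 0 ≤ y i) → Δ (x + y) ≤ Δ x + Δ y)
    (h0 : Δ 0 = 0)
    (hM : ∀ x : Fin k → ℝ, (∀ i, x i ∈ Set.Icc (0 : ℝ) 1) → Δ x ≤ M)
    (x y x' y' : Fin k → ℝ)
    (hx : ∀ i, x i ∈ Set.Icc (0 : ℝ) 1) (hy : ∀ i, y i ∈ Set.Icc (0 : ℝ) 1)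
    (hx' : ∀ i, x' i ∈ Set.Icc (0 : ℝ) 1) (hy' : ∀ i, y' i ∈ Set.Icc (0 : ℝ) 1)
    (a b a' b' : ℝ)
    (ha : a ∈ Set.Icc (0 : ℝ) 1) (hb : b ∈ Set.Icc (0 : ℝ) 1)
    (ha' : a' ∈ Set.Icc (0 : ℝ) 1) (hb' : b' ∈ Set.Icc (0 : ℝ) 1)
    (hD : 0 < Δ (fun i => |y i - x i|)) (hD' : 0 < Δ (fun i => |y' i - x' i|))
    (hab : a ≤ b) (habD : b < a + Δ (fun i => |y i - x i|))
    (hab' : a' ≤ b') (habD' : b' < a' + Δ (fun i => |y' i - x' i|)) :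
    ∀ z : Fin k → ℝ, (∀ i, z i ∈ Set.Icc (0 : ℝ) 1) →
      |min 1 (a + ((b - a) / Δ (fun i => |y i - x i|)) * Δ (fun i => |z i - x i|)) -
        min 1 (a' + ((b' - a') / Δ (fun i => |y' i - x' i|)) * Δ (fun i => |z i - x' i|))|
      ≤ |a - a'| + ((b - a) / Δ (fun i => |y i - x i|)) * Δ (fun i => |x i - x' i|) +
        M * |(b - a) / Δ (fun i => |y i - x i|) - (b' - a') / Δ (fun i => |y' i - x' i|)| := by
  intro z hz
  set D := Δ (fun i => |y i - x i|) with hDdef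
  set D' := Δ (fun i => |y' i - x' i|) with hD'def
  set c := (b - a) / D with hcdef
  set c' := (b' - a') / D' with hc'def
  have hc : 0 ≤ c := div_nonneg (by linarith) hD.le
  have habs : ∀ v w : Fin k → ℝ, ∀ i, (0:ℝ) ≤ (fun i => |v i - w i|) i :=
    fun v w i => abs_nonneg _
  have key : ∀ v w : Fin k → ℝ, Δ (fun i => |z i - v i|) ≤
      Δ (fun i => |z i - w i|) + Δ (fun i => |v i - w i|) := by
    intro v w
    have h1 : Δ (fun i => |z i - v i|) ≤
        Δ ((fun i => |z i - w i|) + (fun i => |v i - w i|)) := by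
      apply hmono _ _ (habs z v)
      intro i
      have h2 : |z i - v i| = |(z i - w i) - (v i - w i)| := by ring_nf
      rw [h2]
      exact (abs_sub _ _)
    exact h1.trans (hsub _ _ (habs z w) (habs v w))
  have keyabs : |Δ (fun i => |z i - x i|) - Δ (fun i => |z i - x' i|)| ≤
      Δ (fun i => |x i - x' i|) := by
    rw [abs_sub_le_iff]
    constructor
    · linarith [key x x']
    · have := key x' x
      have he : (fun i => |x' i - x i|) = fun i => |x i - x' i| := by
        funext i; exact abs_sub_comm _ _
      rw [he] at this; linarith
  have hz' : Δ (fun i => |z i - x' i|) ≤ M := by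
    apply hM
    intro i
    have h1 := hz i; have h2 := hx' i
    simp only [Set.mem_Icc] at *
    constructor
    · exact abs_nonneg _
    · rw [abs_le]; constructor <;> linarith [h1.1, h1.2, h2.1, h2.2]
  have hz'0 : 0 ≤ Δ (fun i => |z i - x' i|) := hnn _ (habs z x')
  refine (min_one_lip _ _).trans ?_
  have heq : a + c * Δ (fun i => |z i - x i|) - (a' + c' * Δ (fun i => |z i - x' i|))
      = (a - a') + c * (Δ (fun i => |z i - x i|) - Δ (fun i => |z i - x' i|))
        + (c - c') * Δ (fun i => |z i - x' i|) := by ring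
  rw [heq]
  refine (abs_add_le _ _).trans ?_
  have t1 : |(a - a') + c * (Δ (fun i => |z i - x i|) - Δ (fun i => |z i - x' i|))|
      ≤ |a - a'| + c * Δ (fun i => |x i - x' i|) := by
    refine (abs_add_le _ _).trans ?_
    gcongr
    rw [abs_mul, abs_of_nonneg hc]
    gcongr
  have t2 : |(c - c') * Δ (fun i => |z i - x' i|)| ≤ M * |c - c'| := by
    rw [abs_mul, abs_of_nonneg hz'0, mul_comm]
    gcongr
    try exact hz'
  linarith
end

section
/- Let Δ be a modulus of arity k with Δ[[0,1]^k] ⊆ [0,1]. Let D'_Δ be the smallest lattice (under pointwise min/max) of functions [0,1]^k → [0,1] containing all functions u_{a,b}^{x̄,ȳ}(z̄) = min{1, a + ((b−a)/Δ(π(ȳ−x̄)))·Δ(π(z̄−x̄))} for x̄, ȳ ∈ [0,1]^k, a ≤ b < a + Δ(π(ȳ−x̄)) with Δ(π(ȳ−x̄)) > 0, together with all constant functions with value in [0,1]. Then every function u : [0,1]^k → [0,1] respecting Δ can be uniformly approximated within any ε > 0 by functions in D'_Δ. -/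
/-- The box `[0,1]^k`. -/
def unitBox (k : ℕ) : Set (Fin k → ℝ) := {z | ∀ i, z i ∈ Set.Icc (0 : ℝ) 1}

/-- The lattice (under pointwise min and max) generated by a set of functions. -/
def latticeGen {k : ℕ} (A : Set ((Fin k → ℝ) → ℝ)) : Set ((Fin k → ℝ) → ℝ) :=
  ⋂₀ {S | A ⊆ S ∧ ∀ f ∈ S, ∀ g ∈ S,
      (fun z => min (f z) (g z)) ∈ S ∧ (fun z => max (f z) (g z)) ∈ S}

/-- The generating family of basic piecewise functions (real parameters). -/
def genSet {k : ℕ} (Δ : (Fin k → ℝ) → ℝ) : Set ((Fin k → ℝ) → ℝ) :=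
  {u | (∃ x ∈ unitBox k, ∃ y ∈ unitBox k, ∃ a b : ℝ, 
        a ∈ Set.Icc (0 : ℝ) 1 ∧ b ∈ Set.Icc (0 : ℝ) 1 ∧ a ≤ b ∧
        0 < Δ (fun i => |y i - x i|) ∧ b < a + Δ (fun i => |y i - x i|) ∧
        u = fun z => min 1 (a + ((b - a) / Δ (fun i => |y i - x i|)) *
          Δ (fun i => |z i - x i|))) ∨
      (∃ a : ℝ, a ∈ Set.Icc (0 : ℝ) 1 ∧  u = fun _ => a)}

lemma latticeGen_basic {k : ℕ} {A : Set ((Fin k → ℝ) → ℝ)} : A ⊆ latticeGen A := by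
  intro f hf
  simp only [latticeGen, Set.mem_sInter, Set.mem_setOf_eq]
  exact fun S hS => hS.1 hf

lemma latticeGen_subset {k : ℕ} {A S : Set ((Fin k → ℝ) → ℝ)} (h1 : A ⊆ S)
    (h2 : ∀ f ∈ S, ∀ g ∈ S,
      (fun z => min (f z) (g z)) ∈ S ∧ (fun z => max (f z) (g z)) ∈ S) :
    latticeGen A ⊆ S := by
  intro f hf
  simp only [latticeGen, Set.mem_sInter, Set.mem_setOf_eq] at hf
  exact hf S ⟨h1, h2⟩

lemma latticeGen_sup {k : ℕ} {A : Set ((Fin k → ℝ) → ℝ)} {f g : (Fin k → ℝ) → ℝ}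
    (hf : f ∈ latticeGen A) (hg : g ∈ latticeGen A) : f ⊔ g ∈ latticeGen A := by
  simp only [latticeGen, Set.mem_sInter, Set.mem_setOf_eq] at *
  intro S hS
  exact (hS.2 f (hf S hS) g (hg S hS)).2

lemma latticeGen_inf {k : ℕ} {A : Set ((Fin k → ℝ) → ℝ)} {f g : (Fin k → ℝ) → ℝ}
    (hf : f ∈ latticeGen A) (hg : g ∈ latticeGen A) : f ⊓ g ∈ latticeGen A := by
  simp only [latticeGen, Set.mem_sInter, Set.mem_setOf_eq] at *
  intro S hS
  exact (hS.2 f (hf S hS) g (hg S hS)).1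

lemma unitBox_compact (k : ℕ) : IsCompact (unitBox k) := by
  have : unitBox k = Set.pi Set.univ (fun _ : Fin k => Set.Icc (0:ℝ) 1) := by
    ext z; simp only [unitBox, Set.mem_setOf_eq, Set.mem_univ_pi]
  rw [this]
  exact isCompact_univ_pi fun i => isCompact_Icc

section cont
variable {k : ℕ} (Δ : (Fin k → ℝ) → ℝ)

lemma genSet_cont (hcont : ContinuousOn Δ {x | ∀ i, 0 ≤ x i}) :
    ∀ g ∈ genSet Δ, ContinuousOn g (unitBox k) := by
  rintro g (⟨x, hx, y, hy, a, b, ha, hb, hab, hpos, hblt, rfl⟩ | ⟨a, ha, rfl⟩)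
  · have hπ : Continuous fun z : Fin k → ℝ => fun i => |z i - x i| := by
      apply continuous_pi; intro i
      exact ((continuous_apply i).sub continuous_const).abs
    have hΔc : ContinuousOn (fun z : Fin k → ℝ => Δ (fun i => |z i - x i|)) Set.univ :=
      hcont.comp hπ.continuousOn (fun z _ => fun i => abs_nonneg _)
    have : ContinuousOn (fun z : Fin k → ℝ =>
        min 1 (a + ((b - a) / Δ (fun i => |y i - x i|)) * Δ (fun i => |z i - x i|)))
        Set.univ := by
      exact continuousOn_const.inf (continuousOn_const.add (continuousOn_const.mul hΔc))
    exact this.mono (Set.subset_univ _)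
  · exact continuousOn_const

end cont

section interp
variable {k : ℕ} {Δ : (Fin k → ℝ) → ℝ} {u : (Fin k → ℝ) → ℝ}

lemma u_cont (hcont : ContinuousOn Δ {x | ∀ i, 0 ≤ x i}) (h0 : Δ 0 = 0)
    (huresp : ∀ z ∈ unitBox k, ∀ w ∈ unitBox k, |u z - u w| ≤ Δ (fun i => |z i - w i|)) :
    ContinuousOn u (unitBox k) := by
  intro w hw
  rw [Metric.continuousWithinAt_iff]
  intro η hη
  have hΔ0 : ContinuousWithinAt Δ {x | ∀ i, 0 ≤ x i} 0 := hcont 0 (fun i => le_refl 0)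
  rw [Metric.continuousWithinAt_iff] at hΔ0
  obtain ⟨δ, hδ, hd⟩ := hΔ0 η hη
  refine ⟨δ, hδ, ?_⟩
  intro z hz hdz
  have hp : (fun i => |z i - w i|) ∈ {x : Fin k → ℝ | ∀ i, 0 ≤ x i} := fun i => abs_nonneg _
  have hpd : dist (fun i => |z i - w i|) (0 : Fin k → ℝ) < δ := by
    rw [dist_pi_lt_iff hδ]
    intro i
    calc dist (|z i - w i|) (0:ℝ) = |z i - w i| := by rw [Real.dist_eq, sub_zero, abs_abs]
    _ = dist (z i) (w i) := (Real.dist_eq _ _).symm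
    _ ≤ dist z w := dist_le_pi_dist z w i
    _ < δ := hdz
  have hlt := hd hp hpd
  rw [Real.dist_eq, h0, sub_zero] at hlt
  have hΔlt : Δ (fun i => |z i - w i|) < η := lt_of_abs_lt hlt
  rw [Real.dist_eq]
  exact lt_of_le_of_lt (huresp z hz w hw) hΔlt

lemma interp_core (hnn : ∀ x : Fin k → ℝ, (∀ i, 0 ≤ x i) → 0 ≤ Δ x) (h0 : Δ 0 = 0)
    (hu : ∀ z ∈ unitBox k, u z ∈ Set.Icc (0 : ℝ) 1)
    (huresp : ∀ z ∈ unitBox k, ∀ w ∈ unitBox k, |u z - u w| ≤ Δ (fun i => |z i - w i|)) :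
    ∀ x ∈ unitBox k, ∀ y ∈ unitBox k, u x ≤ u y → ∀ δ : ℝ, 0 < δ →
    ∃ g ∈ genSet Δ, |g x - u x| ≤ δ ∧ |g y - u y| ≤ δ := by
  intro x hx y hy hxy δ hδ
  have hΔ0nn : 0 ≤ Δ (fun i => |y i - x i|) := hnn _ (fun i => abs_nonneg _)
  have hresp := huresp y hy x hx
  have huy : u y - u x ≤ Δ (fun i => |y i - x i|) := le_trans (le_abs_self _) hresp
  have hax := hu x hx
  have hay := hu y hy
  rcases eq_or_lt_of_le hΔ0nn with h0' | hpos
  · -- Δ₀ = 0 : u x = u y, constant works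
    have heq : u y = u x := by
      have h1 : |u y - u x| ≤ 0 := h0' ▸ hresp
      have := abs_nonneg (u y - u x)
      have : |u y - u x| = 0 := le_antisymm h1 this
      have := abs_eq_zero.mp this
      linarith
    refine ⟨fun _ => u x, Or.inr ⟨u x, hax, rfl⟩, ?_, ?_⟩
    · simp [hδ.le]
    · simp [heq, hδ.le]
  · set Δ0 := Δ (fun i => |y i - x i|) with hΔ0def
    set t := min δ Δ0 with htdef
    have ht : 0 < t := lt_min hδ hpos
    set a := u x with hadef
    set b := max (u x) (u y - t) with hbdef
    have hab : a ≤ b := le_max_left _ _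
    have hb0 : 0 ≤ b := le_trans hax.1 hab
    have hb1 : b ≤ 1 := max_le hax.2 (by linarith [hay.2, ht.le])
    have hblt : b < a + Δ0 := by
      apply max_lt
      · linarith
      · linarith
    refine ⟨_, Or.inl ⟨x, hx, y, hy, a, b, ⟨hax.1, hax.2⟩, ⟨hb0, hb1⟩, hab, hpos, hblt, rfl⟩,
      ?_, ?_⟩
    · have hx0 : (fun i => |x i - x i|) = (0 : Fin k → ℝ) := by funext i; simp
      simp only [hx0, h0, mul_zero, add_zero]
      rw [min_eq_right hax.2]
      simp [hδ.le]
    · have hyval : min 1 (a + (b - a) / Δ0 * Δ (fun i => |y i - x i|)) = b := by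
        rw [← hΔ0def, div_mul_cancel₀ _ (ne_of_gt hpos)]
        rw [add_sub_cancel]
        exact min_eq_right hb1
      rw [hyval]
      have hb_le : b ≤ u y := max_le hxy (by linarith)
      have hb_ge : u y - t ≤ b := le_max_right _ _
      rw [abs_le]
      constructor
      · have := min_le_left δ Δ0
        linarith
      · linarith

lemma interp (hnn : ∀ x : Fin k → ℝ, (∀ i, 0 ≤ x i) → 0 ≤ Δ x) (h0 : Δ 0 = 0)
    (hu : ∀ z ∈ unitBox k, u z ∈ Set.Icc (0 : ℝ) 1)
    (huresp : ∀ z ∈ unitBox k, ∀ w ∈ unitBox k, |u z - u w| ≤ Δ (fun i => |z i - w i|)) :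
    ∀ x ∈ unitBox k, ∀ y ∈ unitBox k, ∀ δ : ℝ, 0 < δ →
    ∃ g ∈ genSet Δ, |g x - u x| ≤ δ ∧ |g y - u y| ≤ δ := by
  intro x hx y hy δ hδ
  rcases le_total (u x) (u y) with h | h
  · exact interp_core hnn h0 hu huresp x hx y hy h δ hδ
  · obtain ⟨g, hg, h1, h2⟩ := interp_core hnn h0 hu huresp y hy x hx h δ hδ
    exact ⟨g, hg, h2, h1⟩

end interp

theorem stmt_11aux {k : ℕ} (Δ : (Fin k → ℝ) → ℝ)
    (hcont : ContinuousOn Δ {x | ∀ i, 0 ≤ x i})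
    (hnn : ∀ x : Fin k → ℝ, (∀ i, 0 ≤ x i) → 0 ≤ Δ x)
    (h0 : Δ 0 = 0)
    (u : (Fin k → ℝ) → ℝ)
    (hu : ∀ z ∈ unitBox k, u z ∈ Set.Icc (0 : ℝ) 1)
    (huresp : ∀ z ∈ unitBox k, ∀ w ∈ unitBox k, |u z - u w| ≤ Δ (fun i => |z i - w i|)) :
    ∀ ε > (0 : ℝ), ∃ h ∈ latticeGen (genSet Δ), ∀ z ∈ unitBox k, |u z - h z| < ε := by
  intro ε hε
  have hucont : ContinuousOn u (unitBox k) := u_cont hcont h0 huresp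
  have hlat_cont : ∀ g ∈ latticeGen (genSet Δ), ContinuousOn g (unitBox k) := by
    intro g hg
    refine latticeGen_subset (S := {f | ContinuousOn f (unitBox k)}) (genSet_cont Δ hcont)
      ?_ hg
    intro f hf g' hg'
    exact ⟨hf.inf hg', hf.sup hg'⟩
  haveI : CompactSpace (unitBox k) := isCompact_iff_compactSpace.mp (unitBox_compact k)
  have hbox0 : (fun _ => (0:ℝ)) ∈ unitBox k := fun i => ⟨le_refl 0, zero_le_one⟩
  have hε4 : 0 < ε / 4 := by linarith
  -- Step A
  have stepA : ∀ x ∈ unitBox k, ∃ h ∈ latticeGen (genSet Δ),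
      h x ≤ u x + ε/4 ∧ ∀ z ∈ unitBox k, u z - ε/2 < h z := by
    intro x hx
    choose g hgmem hgx hgy using
      fun y : unitBox k => interp hnn h0 hu huresp x hx y y.2 (ε/4) hε4
    have hgmem' : ∀ y, g y ∈ latticeGen (genSet Δ) := fun y => latticeGen_basic (hgmem y)
    set U : unitBox k → Set (unitBox k) := fun y => {z | u z - ε/2 < g y z} with hU
    have hUopen : ∀ y, IsOpen (U y) := by
      intro y
      have hc : Continuous fun z : unitBox k => g y z - u z :=
        (((hlat_cont _ (hgmem' y)).restrict)).sub (hucont.restrict)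
      have : U y = (fun z : unitBox k => g y z - u z) ⁻¹' Set.Ioi (-(ε/2)) := by
        ext z
        simp only [hU, Set.mem_setOf_eq, Set.mem_preimage, Set.mem_Ioi]
        constructor <;> intro <;> linarith
      rw [this]
      exact isOpen_Ioi.preimage hc
    have hcov : Set.univ ⊆ ⋃ y, U y := by
      intro z _
      refine Set.mem_iUnion.2 ⟨z, ?_⟩
      have := hgy z
      rw [abs_le] at this
      simp only [hU, Set.mem_setOf_eq]
      linarith [this.1]
    obtain ⟨t, ht⟩ := isCompact_univ.elim_finite_subcover U hUopen hcov
    have htne : t.Nonempty := by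
      have hz0 := ht (Set.mem_univ (⟨fun _ => 0, hbox0⟩ : unitBox k))
      simp only [Set.mem_iUnion] at hz0
      obtain ⟨y, hy, _⟩ := hz0
      exact ⟨y, hy⟩
    refine ⟨t.sup' htne g, ?_, ?_, ?_⟩
    · exact Finset.sup'_induction htne g
        (fun f hf g' hg' => latticeGen_sup hf hg') (fun y _ => hgmem' y)
    · rw [Finset.sup'_apply]
      apply Finset.sup'_le
      intro y _
      have := hgx y
      rw [abs_le] at this
      linarith [this.2]
    · intro z hz
      have hz' := ht (Set.mem_univ (⟨z, hz⟩ : unitBox k))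
      simp only [Set.mem_iUnion] at hz'
      obtain ⟨y, hy, hzy⟩ := hz'
      simp only [hU, Set.mem_setOf_eq] at hzy
      calc u z - ε/2 < g y z := hzy
      _ ≤ (t.sup' htne g) z := by
          rw [Finset.sup'_apply]
          exact Finset.le_sup' (fun y => g y z) hy
  -- Step B
  choose h hmem hhx hhlow using stepA
  set V : unitBox k → Set (unitBox k) := fun x => {z | h x x.2 z < u z + ε/2} with hV
  have hVopen : ∀ x, IsOpen (V x) := by
    intro x
    have hc : Continuous fun z : unitBox k => h x x.2 z - u z :=
      (((hlat_cont _ (hmem x x.2)).restrict)).sub (hucont.restrict)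
    have : V x = (fun z : unitBox k => h x x.2 z - u z) ⁻¹' Set.Iio (ε/2) := by
      ext z
      simp only [hV, Set.mem_setOf_eq, Set.mem_preimage, Set.mem_Iio]
      constructor <;> intro <;> linarith
    rw [this]
    exact isOpen_Iio.preimage hc
  have hcov : Set.univ ⊆ ⋃ x, V x := by
    intro x _
    refine Set.mem_iUnion.2 ⟨x, ?_⟩
    simp only [hV, Set.mem_setOf_eq]
    have := hhx x x.2
    linarith
  obtain ⟨s, hs⟩ := isCompact_univ.elim_finite_subcover V hVopen hcov
  have hsne : s.Nonempty := by
    have hz0 := hs (Set.mem_univ (⟨fun _ => 0, hbox0⟩ : unitBox k))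
    simp only [Set.mem_iUnion] at hz0
    obtain ⟨x, hx, _⟩ := hz0
    exact ⟨x, hx⟩
  refine ⟨s.inf' hsne (fun x => h x x.2), ?_, ?_⟩
  · exact Finset.inf'_induction hsne _
      (fun f hf g' hg' => latticeGen_inf hf hg') (fun x _ => hmem x x.2)
  · intro z hz
    have hupper : (s.inf' hsne fun x => h x x.2) z < u z + ε/2 := by
      have hz' := hs (Set.mem_univ (⟨z, hz⟩ : unitBox k))
      simp only [Set.mem_iUnion] at hz'
      obtain ⟨x, hx, hzx⟩ := hz'
      simp only [hV, Set.mem_setOf_eq] at hzx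
      calc (s.inf' hsne fun x => h x x.2) z ≤ h x x.2 z := by
            rw [Finset.inf'_apply]
            exact Finset.inf'_le (fun x : unitBox k => h x x.2 z) hx
      _ < u z + ε/2 := hzx
    have hlower : u z - ε/2 < (s.inf' hsne fun x => h x x.2) z := by
      rw [Finset.inf'_apply]
      rw [Finset.lt_inf'_iff]
      intro x _
      exact hhlow x x.2 z hz
    rw [abs_lt]
    constructor <;> linarith

theorem stmt_11 {k : ℕ} (Δ : (Fin k → ℝ) → ℝ)
    (hcont : ContinuousOn Δ {x | ∀ i, 0 ≤ x i})
    (hnn : ∀ x : Fin k → ℝ, (∀ i, 0 ≤ x i) → 0 ≤ Δ x)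
    (hmono : ∀ x y : Fin k → ℝ, (∀ i, 0 ≤ x i) → (∀ i, x i ≤ y i) → Δ x ≤ Δ y)
    (hsub : ∀ x y : Fin k → ℝ, (∀ i, 0 ≤ x i) → (∀ i, 0 ≤ y i) → Δ (x + y) ≤ Δ x + Δ y)
    (h0 : Δ 0 = 0)
    (hΔ1 : ∀ x ∈ unitBox k, Δ x ≤ 1)
    (u : (Fin k → ℝ) → ℝ)
    (hu : ∀ z ∈ unitBox k, u z ∈ Set.Icc (0 : ℝ) 1)
    (huresp : ∀ z ∈ unitBox k, ∀ w ∈ unitBox k, |u z - u w| ≤ Δ (fun i => |z i - w i|)) :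
    ∀ ε > (0 : ℝ), ∃ h ∈ latticeGen (genSet Δ), ∀ z ∈ unitBox k, |u z - h z| < ε := by
  exact stmt_11aux Δ hcont hnn h0 u hu huresp
end

section
/- Let Δ₀, ..., Δ_{k-1} be moduli of arity n, none identically zero, and let Ω_n be a modulus of arity n. Define f(r̄) = inf{ Ω_n(x̄) : x̄ ∈ (ℝ≥0)^n, Δᵢ(x̄) ≥ r̄(i) for all i < k } on the set A of r̄ ∈ (ℝ≥0)^k where the infimum is over a nonempty set. Then A is downward closed and contains an open neighborhood of 0, and f is non-decreasing with f(0) = 0 and continuous at 0. -/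
theorem stmt_14 {n k : ℕ} (Δs : Fin k → (Fin n → ℝ) → ℝ) (Ωn : (Fin n → ℝ) → ℝ)
    (hΔcont : ∀ i, ContinuousOn (Δs i) {x | ∀ j, 0 ≤ x j})
    (hΔnn : ∀ i, ∀ x : Fin n → ℝ, (∀ j, 0 ≤ x j) → 0 ≤ Δs i x)
    (hΔmono : ∀ i, ∀ x y : Fin n → ℝ, (∀ j, 0 ≤ x j) → (∀ j, x j ≤ y j) → Δs i x ≤ Δs i y)
    (hΔsub : ∀ i, ∀ x y : Fin n → ℝ, (∀ j, 0 ≤ x j) → (∀ j, 0 ≤ y j) →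
      Δs i (x + y) ≤ Δs i x + Δs i y)
    (hΔ0 : ∀ i, Δs i 0 = 0)
    (hΔne : ∀ i, ∃ x : Fin n → ℝ, (∀ j, 0 ≤ x j) ∧ 0 < Δs i x)
    (hΩcont : ContinuousOn Ωn {x | ∀ j, 0 ≤ x j})
    (hΩnn : ∀ x : Fin n → ℝ, (∀ j, 0 ≤ x j) → 0 ≤ Ωn x)
    (hΩmono : ∀ x y : Fin n → ℝ, (∀ j, 0 ≤ x j) → (∀ j, x j ≤ y j) → Ωn x ≤ Ωn y)
    (hΩsub : ∀ x y : Fin n → ℝ, (∀ j, 0 ≤ x j) → (∀ j, 0 ≤ y j) → Ωn (x + y) ≤ Ωn x + Ωn y)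
    (hΩ0 : Ωn 0 = 0)
    (A : Set (Fin k → ℝ))
    (hA : A = {r | (∀ i, 0 ≤ r i) ∧ ∃ x : Fin n → ℝ, (∀ j, 0 ≤ x j) ∧ ∀ i, r i ≤ Δs i x})
    (f : (Fin k → ℝ) → ℝ)
    (hf : ∀ r, f r = sInf {t | ∃ x : Fin n → ℝ, (∀ j, 0 ≤ x j) ∧ (∀ i, r i ≤ Δs i x) ∧ t = Ωn x}) :
    (∀ r ∈ A, ∀ r' : Fin k → ℝ, (∀ i, 0 ≤ r' i) → (∀ i, r' i ≤ r i) → r' ∈ A) ∧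
    (∃ ε > (0 : ℝ), ∀ r : Fin k → ℝ, (∀ i, 0 ≤ r i) → (∀ i, r i < ε) → r ∈ A) ∧
    (∀ r ∈ A, ∀ r' ∈ A, (∀ i, r i ≤ r' i) → f r ≤ f r') ∧
    f 0 = 0 ∧
    ContinuousWithinAt f A 0 := by
  -- The witness point x₀ dominating all the Δ-witnesses
  choose w hwnn hwpos using hΔne
  set x₀ : Fin n → ℝ := ∑ i : Fin k, w i with hx₀
  have hx₀nn : ∀ j, 0 ≤ x₀ j := by
    intro j
    simp only [hx₀, Finset.sum_apply]
    exact Finset.sum_nonneg fun i _ => hwnn i j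
  have hx₀big : ∀ i, 0 < Δs i x₀ := by
    intro i
    refine lt_of_lt_of_le (hwpos i) (hΔmono i _ _ (hwnn i) ?_)
    intro j
    simp only [hx₀, Finset.sum_apply]
    exact Finset.single_le_sum (fun l _ => hwnn l j) (Finset.mem_univ i)
  -- a uniform positive lower bound c for Δᵢ x₀
  have hc : ∃ c : ℝ, 0 < c ∧ ∀ i, c ≤ Δs i x₀ := by
    rcases isEmpty_or_nonempty (Fin k) with h | h
    · exact ⟨1, one_pos, fun i => (h.elim i)⟩
    · refine ⟨Finset.univ.inf' Finset.univ_nonempty (fun i => Δs i x₀), ?_, ?_⟩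
      · rcases Finset.exists_mem_eq_inf' Finset.univ_nonempty (fun i => Δs i x₀) with ⟨i, _, hi⟩
        rw [hi]; exact hx₀big i
      · intro i; exact Finset.inf'_le _ (Finset.mem_univ i)
  obtain ⟨c, hcpos, hcle⟩ := hc
  -- subadditivity iterated: Δᵢ (m • y) ≤ m * Δᵢ y
  have hiter : ∀ i, ∀ m : ℕ, ∀ y : Fin n → ℝ, (∀ j, 0 ≤ y j) →
      Δs i ((m : ℝ) • y) ≤ (m : ℝ) * Δs i y := by
    intro i m
    induction m with
    | zero => intro y hy; simp [hΔ0 i]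
    | succ m ih =>
      intro y hy
      have h1 : ((m + 1 : ℕ) : ℝ) • y = (m : ℝ) • y + y := by
        push_cast; rw [add_smul, one_smul]
      have hmy : ∀ j, 0 ≤ ((m : ℝ) • y) j := by
        intro j
        simp only [Pi.smul_apply, smul_eq_mul]
        exact mul_nonneg (Nat.cast_nonneg m) (hy j)
      calc Δs i (((m + 1 : ℕ) : ℝ) • y) = Δs i ((m : ℝ) • y + y) := by rw [h1]
        _ ≤ Δs i ((m : ℝ) • y) + Δs i y := hΔsub i _ _ hmy hy
        _ ≤ (m : ℝ) * Δs i y + Δs i y := by linarith [ih y hy]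
        _ = ((m + 1 : ℕ) : ℝ) * Δs i y := by push_cast; ring
  -- the scaled points yₘ = x₀ / (m+1)
  have hy : ∀ m : ℕ, (∀ j, 0 ≤ (((m + 1 : ℝ))⁻¹ • x₀) j) ∧
      ∀ i, c / (m + 1 : ℝ) ≤ Δs i (((m + 1 : ℝ))⁻¹ • x₀) := by
    intro m
    have hm1 : (0 : ℝ) < (m + 1 : ℝ) := by positivity
    have hynn : ∀ j, 0 ≤ (((m + 1 : ℝ))⁻¹ • x₀) j := by
      intro j
      simp only [Pi.smul_apply, smul_eq_mul]
      exact mul_nonneg (by positivity) (hx₀nn j)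
    refine ⟨hynn, fun i => ?_⟩
    have heq : ((m + 1 : ℕ) : ℝ) • (((m + 1 : ℝ))⁻¹ • x₀) = x₀ := by
      rw [smul_smul]
      push_cast
      rw [mul_inv_cancel₀ (ne_of_gt hm1), one_smul]
    have := hiter i (m + 1) (((m + 1 : ℝ))⁻¹ • x₀) hynn
    rw [heq] at this
    have hle : c ≤ ((m + 1 : ℕ) : ℝ) * Δs i (((m + 1 : ℝ))⁻¹ • x₀) := le_trans (hcle i) this
    rw [div_le_iff₀ hm1]
    push_cast at hle ⊢
    linarith
  -- nonemptiness / lower-bound facts about the defining sets of f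
  have hbdd : ∀ r : Fin k → ℝ, BddBelow {t | ∃ x : Fin n → ℝ, (∀ j, 0 ≤ x j) ∧
      (∀ i, r i ≤ Δs i x) ∧ t = Ωn x} := by
    intro r
    refine ⟨0, fun t ht => ?_⟩
    obtain ⟨x, hxnn, _, rfl⟩ := ht
    exact hΩnn x hxnn
  have hne' : ∀ r ∈ A, ({t | ∃ x : Fin n → ℝ, (∀ j, 0 ≤ x j) ∧
      (∀ i, r i ≤ Δs i x) ∧ t = Ωn x} : Set ℝ).Nonempty := by
    intro r hr
    rw [hA] at hr
    obtain ⟨_, x, hxnn, hx⟩ := hr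
    exact ⟨Ωn x, x, hxnn, hx, rfl⟩
  have hfnn : ∀ r ∈ A, 0 ≤ f r := by
    intro r hr
    rw [hf]
    refine le_csInf (hne' r hr) ?_
    rintro t ⟨x, hxnn, _, rfl⟩
    exact hΩnn x hxnn
  have h0A : (0 : Fin k → ℝ) ∈ A := by
    rw [hA]
    exact ⟨fun i => le_refl 0, 0, fun j => le_refl 0, fun i => hΔnn i 0 (fun j => le_refl 0)⟩
  have hf0 : f 0 = 0 := by
    rw [hf]
    apply le_antisymm
    · apply csInf_le (hbdd 0)
      exact ⟨0, fun j => le_refl 0, fun i => hΔnn i 0 (fun j => le_refl 0), hΩ0.symm⟩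
    · refine le_csInf (hne' 0 h0A) ?_
      rintro t ⟨x, hxnn, _, rfl⟩
      exact hΩnn x hxnn
  refine ⟨?_, ?_, ?_, hf0, ?_⟩
  -- downward closed
  · intro r hr r' hr'nn hr'le
    rw [hA] at hr ⊢
    obtain ⟨hrnn, x, hxnn, hx⟩ := hr
    exact ⟨hr'nn, x, hxnn, fun i => le_trans (hr'le i) (hx i)⟩
  -- neighborhood of 0
  · refine ⟨c, hcpos, fun r hrnn hrlt => ?_⟩
    rw [hA]
    exact ⟨hrnn, x₀, hx₀nn, fun i => le_trans (hrlt i).le (hcle i)⟩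
  -- monotone
  · intro r hr r' hr' hle
    rw [hf, hf]
    apply csInf_le_csInf (hbdd r) (hne' r' hr')
    rintro t ⟨x, hxnn, hx, rfl⟩
    exact ⟨x, hxnn, fun i => le_trans (hle i) (hx i), rfl⟩
  -- continuity at 0 within A
  · rw [Metric.continuousWithinAt_iff]
    intro ε hε
    -- continuity of Ωn at 0
    have h0mem : (0 : Fin n → ℝ) ∈ {x : Fin n → ℝ | ∀ j, 0 ≤ x j} := fun j => le_refl 0
    have hΩ0cont := hΩcont 0 h0mem
    rw [Metric.continuousWithinAt_iff] at hΩ0cont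
    obtain ⟨δ', hδ'pos, hδ'⟩ := hΩ0cont ε hε
    -- choose m large enough
    obtain ⟨m, hm⟩ := exists_nat_gt (‖x₀‖ / δ')
    set y : Fin n → ℝ := ((m + 1 : ℝ))⁻¹ • x₀ with hydef
    obtain ⟨hynn, hylb⟩ := hy m
    have hm1 : (0 : ℝ) < (m + 1 : ℝ) := by positivity
    have hyclose : dist y 0 < δ' := by
      rw [dist_zero_right, hydef, norm_smul]
      have : ‖((m + 1 : ℝ))⁻¹‖ = ((m + 1 : ℝ))⁻¹ := by
        rw [Real.norm_eq_abs, abs_of_pos (by positivity)]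
      rw [this, inv_mul_lt_iff₀ hm1]
      have h1 : ‖x₀‖ / δ' < m + 1 := lt_of_le_of_lt (le_of_lt hm) (by linarith)
      calc ‖x₀‖ = (‖x₀‖ / δ') * δ' := by field_simp
        _ < (m + 1) * δ' := by
            apply mul_lt_mul_of_pos_right h1 hδ'pos
    have hΩy : Ωn y < ε := by
      have := hδ' hynn hyclose
      rw [hΩ0, dist_zero_right, Real.norm_eq_abs] at this
      exact lt_of_le_of_lt (le_abs_self _) this
    refine ⟨c / (m + 1 : ℝ), by positivity, fun {r} hrA hrclose => ?_⟩
    have hfr : f r ≤ Ωn y := by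
      rw [hf]
      apply csInf_le (hbdd r)
      refine ⟨y, hynn, fun i => ?_, rfl⟩
      have : |r i| ≤ dist r 0 := by
        have h := norm_le_pi_norm (r - 0) i
        simpa [Real.norm_eq_abs, dist_eq_norm] using h
      exact le_trans (le_trans (le_abs_self _) (le_trans this hrclose.le)) (hylb i)
    rw [hf0, dist_zero_right, Real.norm_eq_abs, abs_of_nonneg (hfnn r hrA)]
    exact lt_of_le_of_lt hfr hΩy
end

section
/- Let M be a set and r : M^n × M^n → [0,1] a pseudometric for each n (on equal-length tuples). Define r'(ā, b̄) = sup_{c,d ∈ M} inf_{c',d' ∈ M} max(r(āc, b̄d'), r(āc', b̄d)). Then r' restricted to M^n × M^n is again a pseudometric (symmetric, vanishing on the diagonal, satisfying the triangle inequality), provided r is symmetric under swapping the two tuple arguments. -/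
section Aux18

variable {M : Type*}

def S18 (r : List M → List M → ℝ) (a b : List M) (c d : M) : Set ℝ :=
  {s | ∃ c' d' : M, s = max (r (a ++ [c]) (b ++ [d'])) (r (a ++ [c']) (b ++ [d]))}

def T18 (r : List M → List M → ℝ) (a b : List M) : Set ℝ :=
  {t | ∃ c d : M, t = sInf (S18 r a b c d)}

lemma S18_sub (r : List M → List M → ℝ)
    (hbd : ∀ a b : List M, r a b ∈ Set.Icc (0 : ℝ) 1) (a b : List M) (c d : M) :
    S18 r a b c d ⊆ Set.Icc 0 1 := by
  rintro s ⟨c', d', rfl⟩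
  constructor
  · exact le_max_of_le_left (hbd _ _).1
  · exact max_le (hbd _ _).2 (hbd _ _).2

lemma S18_nonempty [Nonempty M] (r : List M → List M → ℝ) (a b : List M) (c d : M) :
    (S18 r a b c d).Nonempty := by
  obtain ⟨m⟩ := ‹Nonempty M›
  exact ⟨_, m, m, rfl⟩

lemma sInf_S18_mem [Nonempty M] (r : List M → List M → ℝ)
    (hbd : ∀ a b : List M, r a b ∈ Set.Icc (0 : ℝ) 1) (a b : List M) (c d : M) :
    sInf (S18 r a b c d) ∈ Set.Icc (0 : ℝ) 1 := by
  obtain ⟨s, hs⟩ := S18_nonempty r a b c d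
  constructor
  · exact le_csInf ⟨s, hs⟩ fun x hx => (S18_sub r hbd a b c d hx).1
  · calc sInf (S18 r a b c d) ≤ s := csInf_le ⟨0, fun x hx => (S18_sub r hbd a b c d hx).1⟩ hs
      _ ≤ 1 := (S18_sub r hbd a b c d hs).2

lemma T18_sub [Nonempty M] (r : List M → List M → ℝ)
    (hbd : ∀ a b : List M, r a b ∈ Set.Icc (0 : ℝ) 1) (a b : List M) :
    T18 r a b ⊆ Set.Icc 0 1 := by
  rintro t ⟨c, d, rfl⟩
  exact sInf_S18_mem r hbd a b c d

lemma T18_bddAbove [Nonempty M] (r : List M → List M → ℝ)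
    (hbd : ∀ a b : List M, r a b ∈ Set.Icc (0 : ℝ) 1) (a b : List M) :
    BddAbove (T18 r a b) :=
  ⟨1, fun t ht => (T18_sub r hbd a b ht).2⟩

end Aux18

theorem stmt_18 {M : Type*} (r : List M → List M → ℝ)
    (hbd : ∀ a b : List M, r a b ∈ Set.Icc (0 : ℝ) 1)
    (hrefl : ∀ a : List M, r a a = 0)
    (hsymm : ∀ a b : List M, r a b = r b a)
    (htri : ∀ a b c : List M, a.length = b.length → b.length = c.length →
      r a c ≤ r a b + r b c)
    (r' : List M → List M → ℝ)
    (hr' : ∀ a b : List M, r' a b =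
      sSup {t | ∃ c d : M, t = sInf {s | ∃ c' d' : M,
        s = max (r (a ++ [c]) (b ++ [d'])) (r (a ++ [c']) (b ++ [d]))}}) :
    (∀ a : List M, r' a a = 0) ∧
    (∀ a b : List M, r' a b = r' b a) ∧
    (∀ a b c : List M, a.length = b.length → b.length = c.length →
      r' a c ≤ r' a b + r' b c) := by
  have hr'T : ∀ a b : List M, r' a b = sSup (T18 r a b) := hr'
  rcases isEmpty_or_nonempty M with hM | hM
  · have hzero : ∀ a b : List M, r' a b = 0 := by
      intro a b
      rw [hr'T]
      have : T18 r a b = ∅ := by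
        ext t
        simp only [T18, Set.mem_setOf_eq, Set.mem_empty_iff_false, iff_false]
        rintro ⟨c, _, _⟩
        exact hM.false c
      rw [this, Real.sSup_empty]
    exact ⟨fun a => hzero a a, fun a b => by rw [hzero, hzero],
      fun a b c _ _ => by rw [hzero, hzero, hzero]; norm_num⟩
  · haveI := hM
    have hSbdd : ∀ (a b : List M) (c d : M), BddBelow (S18 r a b c d) :=
      fun a b c d => ⟨0, fun x hx => (S18_sub r hbd a b c d hx).1⟩
    -- reflexivity
    have hrefl' : ∀ a : List M, r' a a = 0 := by
      intro a
      rw [hr'T]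
      have hall : ∀ t ∈ T18 r a a, t = 0 := by
        rintro t ⟨c, d, rfl⟩
        apply le_antisymm
        · refine csInf_le (hSbdd a a c d) ?_
          exact ⟨d, c, by rw [hrefl, hrefl]; simp⟩
        · exact (sInf_S18_mem r hbd a a c d).1
      apply le_antisymm
      · exact Real.sSup_le (fun x hx => (hall x hx).le) le_rfl
      · obtain ⟨m⟩ := hM
        have h0 : (0 : ℝ) ∈ T18 r a a := by
          have := hall _ ⟨m, m, rfl⟩
          rw [← this]; exact ⟨m, m, rfl⟩
        exact le_csSup (T18_bddAbove r hbd a a) h0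
    -- symmetry
    have hTsymm : ∀ a b : List M, T18 r a b = T18 r b a := by
      intro a b
      have hS : ∀ c d : M, S18 r a b c d = S18 r b a d c := by
        intro c d
        ext s
        constructor
        · rintro ⟨c', d', rfl⟩
          exact ⟨d', c', by rw [hsymm (b ++ [d']) (a ++ [c]), hsymm (b ++ [d]) (a ++ [c']),
            max_comm]⟩
        · rintro ⟨d', c', rfl⟩
          exact ⟨c', d', by rw [hsymm (a ++ [c]) (b ++ [d']), hsymm (a ++ [c']) (b ++ [d]),
            max_comm]⟩
      ext t
      constructor
      · rintro ⟨c, d, rfl⟩; exact ⟨d, c, by rw [hS c d]⟩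
      · rintro ⟨d, c, rfl⟩; exact ⟨c, d, by rw [hS c d]⟩
    have hsymm' : ∀ a b : List M, r' a b = r' b a := by
      intro a b; rw [hr'T, hr'T, hTsymm]
    -- triangle
    refine ⟨hrefl', hsymm', ?_⟩
    intro a b c hab hbc
    have hr'nonneg : ∀ u v : List M, 0 ≤ r' u v := by
      intro u v
      rw [hr'T]
      obtain ⟨m⟩ := hM
      have : sInf (S18 r u v m m) ∈ T18 r u v := ⟨m, m, rfl⟩
      calc (0:ℝ) ≤ sInf (S18 r u v m m) := (sInf_S18_mem r hbd u v m m).1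
        _ ≤ sSup (T18 r u v) := le_csSup (T18_bddAbove r hbd u v) this
    rw [hr'T a c]
    refine Real.sSup_le ?_ (add_nonneg (hr'nonneg a b) (hr'nonneg b c))
    rintro t ⟨x, z, rfl⟩
    refine le_of_forall_pos_le_add ?_
    intro ε hε
    obtain ⟨m⟩ := hM
    have hquarter : 0 < ε / 4 := by positivity
    -- helper: get near-infimum elements below r' + ε/4
    have key : ∀ (u v : List M) (p q : M), ∃ s ∈ S18 r u v p q, s < r' u v + ε / 4 := by
      intro u v p q
      obtain ⟨s, hs, hslt⟩ := Real.lt_sInf_add_pos (S18_nonempty r u v p q) hquarter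
      refine ⟨s, hs, hslt.trans_le ?_⟩
      have : sInf (S18 r u v p q) ≤ r' u v := by
        rw [hr'T]
        exact le_csSup (T18_bddAbove r hbd u v) ⟨p, q, rfl⟩
      linarith
    obtain ⟨s1, ⟨x1, y1, rfl⟩, hs1⟩ := key a b x m
    have h1 : r (a ++ [x]) (b ++ [y1]) < r' a b + ε / 4 := (le_max_left _ _).trans_lt hs1
    obtain ⟨s2, ⟨y2, z2, rfl⟩, hs2⟩ := key b c y1 z
    have h2 : r (b ++ [y1]) (c ++ [z2]) < r' b c + ε / 4 := (le_max_left _ _).trans_lt hs2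
    have h2' : r (b ++ [y2]) (c ++ [z]) < r' b c + ε / 4 := (le_max_right _ _).trans_lt hs2
    obtain ⟨s3, ⟨x3, y3, rfl⟩, hs3⟩ := key a b m y2
    have h3 : r (a ++ [x3]) (b ++ [y2]) < r' a b + ε / 4 := (le_max_right _ _).trans_lt hs3
    have hlen1 : (a ++ [x]).length = (b ++ [y1]).length := by simp [hab]
    have hlen2 : (b ++ [y1]).length = (c ++ [z2]).length := by simp [hbc]
    have hlen3 : (a ++ [x3]).length = (b ++ [y2]).length := by simp [hab]
    have hlen4 : (b ++ [y2]).length = (c ++ [z]).length := by simp [hbc]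
    have htriA : r (a ++ [x]) (c ++ [z2]) ≤ r' a b + r' b c + ε / 2 := by
      have := htri (a ++ [x]) (b ++ [y1]) (c ++ [z2]) hlen1 hlen2
      linarith
    have htriB : r (a ++ [x3]) (c ++ [z]) ≤ r' a b + r' b c + ε / 2 := by
      have := htri (a ++ [x3]) (b ++ [y2]) (c ++ [z]) hlen3 hlen4
      linarith
    have hmem : max (r (a ++ [x]) (c ++ [z2])) (r (a ++ [x3]) (c ++ [z])) ∈ S18 r a c x z :=
      ⟨x3, z2, rfl⟩
    calc sInf (S18 r a c x z) ≤ _ := csInf_le (hSbdd a c x z) hmem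
      _ ≤ r' a b + r' b c + ε / 2 := max_le htriA htriB
      _ ≤ r' a b + r' b c + ε := by linarith
end
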